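/- arXiv:1810.05205 — 11 statements merged into one kernel-verified Lean document; each statement's English description precedes it below -/
import Mathlib

section
/- In R(F₄) = K⟨x,y⟩/(xyx, yxy, (x+y)²), the identities xy³ = x⁴ and y³x = x⁴ hold. -/
/-- The defining relations of `R(F₄) = K⟨x,y⟩/(xyx, yxy, (x+y)²)`. -/
inductive F4Rel (K : Type) [Field K] : FreeAlgebra K Bool → FreeAlgebra K Bool → Prop
  | xyx : F4Rel K (FreeAlgebra.ι K true * FreeAlgebra.ι K false * FreeAlgebra.ι K true) 0
  | yxy : F4Rel K (FreeAlgebra.ι K false * FreeAlgebra.ι K true * FreeAlgebra.ι K false) 0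
  | sq  : F4Rel K ((FreeAlgebra.ι K true + FreeAlgebra.ι K false) ^ 2) 0

/-- The algebra `R(F₄)`. -/
abbrev RF4 (K : Type) [Field K] := RingQuot (F4Rel K)

/-- The image of the generator `x` in `R(F₄)`. -/
noncomputable def Rx (K : Type) [Field K] : RF4 K :=
  RingQuot.mkAlgHom K (F4Rel K) (FreeAlgebra.ι K true)

/-- The image of the generator `y` in `R(F₄)`. -/
noncomputable def Ry (K : Type) [Field K] : RF4 K :=
  RingQuot.mkAlgHom K (F4Rel K) (FreeAlgebra.ι K false)

theorem stmt4 (K : Type) [Field K] :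
    Rx K * (Ry K) ^ 3 = (Rx K) ^ 4 ∧ (Ry K) ^ 3 * Rx K = (Rx K) ^ 4 := by
  set X := Rx K with hX
  set Y := Ry K with hY
  have h1 : X * Y * X = 0 := by
    have := RingQuot.mkAlgHom_rel K (F4Rel.xyx (K := K))
    simpa [hX, hY, Rx, Ry, map_mul] using this
  have h2 : Y * X * Y = 0 := by
    have := RingQuot.mkAlgHom_rel K (F4Rel.yxy (K := K))
    simpa [hX, hY, Rx, Ry, map_mul] using this
  have h3 : (X + Y) ^ 2 = 0 := by
    have := RingQuot.mkAlgHom_rel K (F4Rel.sq (K := K))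
    simpa [hX, hY, Rx, Ry, map_pow, map_add] using this
  constructor
  · have key : X * Y ^ 3 - X ^ 4 =
        X * Y * ((X + Y) ^ 2) - X * ((X + Y) ^ 2) * X - (X * Y * X) * Y + X * (X * Y * X) := by
      noncomm_ring
    rw [h1, h3] at key
    simp only [h1, h2, h3, mul_zero, zero_mul, sub_zero, add_zero, zero_add, zero_sub, neg_zero] at key
    exact sub_eq_zero.mp key
  · have key : Y ^ 3 * X - X ^ 4 =
        ((X + Y) ^ 2) * Y * X - (Y * X * Y) * X - X * ((X + Y) ^ 2) * X + (X * Y * X) * X := by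
      noncomm_ring
    rw [h2, h3] at key
    simp only [h1, h2, h3, mul_zero, zero_mul, sub_zero, add_zero, zero_add, zero_sub, neg_zero] at key
    exact sub_eq_zero.mp key
end

section
/- In R(F₄) = K⟨x,y⟩/(xyx, yxy, (x+y)²), the identity y⁴ = x³y holds. -/
theorem stmt5 (K : Type) [Field K] :
    (Ry K) ^ 4 = (Rx K) ^ 3 * Ry K := by
  set a := Rx K with ha
  set b := Ry K with hb
  have h1 : a * b * a = 0 := by
    have := RingQuot.mkAlgHom_rel K (F4Rel.xyx (K := K))
    simpa [ha, hb, Rx, Ry, map_mul] using this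
  have h2 : b * a * b = 0 := by
    have := RingQuot.mkAlgHom_rel K (F4Rel.yxy (K := K))
    simpa [ha, hb, Rx, Ry, map_mul] using this
  have hs : a ^ 2 + a * b + b * a + b ^ 2 = 0 := by
    have h3 := RingQuot.mkAlgHom_rel K (F4Rel.sq (K := K))
    have h3' : (a + b) ^ 2 = 0 := by
      simpa [ha, hb, Rx, Ry, map_add, map_pow] using h3
    rw [← h3']; noncomm_ring
  have F1 : a * b ^ 2 + a ^ 3 + a ^ 2 * b = 0 := by
    have e : a * b ^ 2 + a ^ 3 + a ^ 2 * b
        = a * (a ^ 2 + a * b + b * a + b ^ 2) - (a * b * a) := by noncomm_ring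
    rw [e, hs, h1, mul_zero, sub_zero]
  have F2 : b ^ 3 + b * a ^ 2 + b ^ 2 * a = 0 := by
    have e : b ^ 3 + b * a ^ 2 + b ^ 2 * a
        = b * (a ^ 2 + a * b + b * a + b ^ 2) - (b * a * b) := by noncomm_ring
    rw [e, hs, h2, mul_zero, sub_zero]
  have F3 : a * b ^ 2 * a + a ^ 4 = 0 := by
    have e : a * b ^ 2 * a + a ^ 4
        = (a * b ^ 2 + a ^ 3 + a ^ 2 * b) * a - a * (a * b * a) := by noncomm_ring
    rw [e, F1, h1, zero_mul, mul_zero, sub_zero]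
  have F4 : a * b ^ 3 - a ^ 4 = 0 := by
    have e : a * b ^ 3 - a ^ 4
        = a * (b ^ 3 + b * a ^ 2 + b ^ 2 * a) - (a * b * a) * a
          - (a * b ^ 2 * a + a ^ 4) := by noncomm_ring
    rw [e, F2, h1, F3]; simp
  have F5 : a ^ 2 * b ^ 2 + a ^ 4 + a ^ 3 * b = 0 := by
    have e : a ^ 2 * b ^ 2 + a ^ 4 + a ^ 3 * b
        = a * (a * b ^ 2 + a ^ 3 + a ^ 2 * b) := by noncomm_ring
    rw [e, F1, mul_zero]
  have key : b ^ 4 - a ^ 3 * b = 0 := by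
    have e : b ^ 4 - a ^ 3 * b
        = (a ^ 2 + a * b + b * a + b ^ 2) * b ^ 2
          - (a ^ 2 * b ^ 2 + a ^ 4 + a ^ 3 * b)
          - (a * b ^ 3 - a ^ 4)
          - (b * a * b) * b := by noncomm_ring
    rw [e, hs, F5, F4, h2, zero_mul, zero_mul, sub_zero, sub_zero, sub_zero]
  exact sub_eq_zero.mp key
end

section
/- In R(F₄) = K⟨x,y⟩/(xyx, yxy, (x+y)²), the identities x²y² = -(x⁴ + x³y) and y²x² = -(x⁴ + x³y) hold. -/
theorem stmt6 (K : Type) [Field K] :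
    (Rx K) ^ 2 * (Ry K) ^ 2 = -((Rx K) ^ 4 + (Rx K) ^ 3 * Ry K) ∧
    (Ry K) ^ 2 * (Rx K) ^ 2 = -((Rx K) ^ 4 + (Rx K) ^ 3 * Ry K) := by
  set a := Rx K with ha
  set b := Ry K with hb
  have h1 : a * b * a = 0 := by
    have := RingQuot.mkAlgHom_rel K (F4Rel.xyx (K := K))
    simpa [Rx, Ry, ha, hb] using this
  have h2 : b * a * b = 0 := by
    have := RingQuot.mkAlgHom_rel K (F4Rel.yxy (K := K))
    simpa [Rx, Ry, ha, hb] using this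
  have h3 : (a + b) ^ 2 = 0 := by
    have := RingQuot.mkAlgHom_rel K (F4Rel.sq (K := K))
    simpa [Rx, Ry, ha, hb] using this
  constructor
  · have key : a ^ 2 * b ^ 2 + (a ^ 4 + a ^ 3 * b) =
        a ^ 2 * ((a + b) ^ 2) - a * (a * b * a) := by
      noncomm_ring
    rw [h1, h3, mul_zero, mul_zero, sub_zero] at key
    exact eq_neg_of_add_eq_zero_left key
  · have key : b ^ 2 * a ^ 2 + (a ^ 4 + a ^ 3 * b) =
        (b ^ 2 * ((a + b) ^ 2) - b * (b * a * b))
        - (b * ((a + b) ^ 2) * b - b * (b * a * b) - (b * a * b) * b)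
        - (((a + b) ^ 2) * b * a - (b * a * b) * a - a * (a * b * a))
        + (a * ((a + b) ^ 2) * a - (a * b * a) * a - a * (a * b * a))
        + (((a + b) ^ 2) * a * b - (a * b * a) * b - b * (b * a * b)) := by
      noncomm_ring
    rw [h1, h2, h3] at key
    simp only [mul_zero, zero_mul, sub_zero, zero_sub, neg_zero, add_zero, sub_self] at key
    exact eq_neg_of_add_eq_zero_left key
end

section
/- In R(F₄) = K⟨x,y⟩/(xyx, yxy, (x+y)²), the identities y⁵ = y²x³ = yx³y = x³y² = xy²x² = x²y²x = -x⁵ hold. -/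
structure IsF4Pair {R : Type*} [Ring R] (x y : R) : Prop where
  xyx : x * y * x = 0
  yxy : y * x * y = 0
  sq : (x + y) ^ 2 = 0

namespace IsF4Pair

variable {R : Type*} [Ring R] {x y : R}

theorem mul_sq (h : IsF4Pair x y) : x * y ^ 2 = -x ^ 3 - x ^ 2 * y := by
  linear_combination (norm := noncomm_ring) x * h.sq - h.xyx

theorem sq_mul (h : IsF4Pair x y) : y ^ 2 * x = -x ^ 3 - y * x ^ 2 := by
  linear_combination (norm := noncomm_ring) h.sq * x - h.xyx

theorem pow_three_eq (h : IsF4Pair x y) : y ^ 3 = x ^ 3 := by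
  linear_combination (norm := noncomm_ring) y * h.sq - h.yxy - h.sq_mul

theorem sq_mul_pow_three (h : IsF4Pair x y) : y ^ 2 * x ^ 3 = -x ^ 5 := by
  linear_combination (norm := noncomm_ring) h.sq_mul * x ^ 2 - y * x * h.pow_three_eq.symm
    - h.yxy * y ^ 2

theorem pow_five (h : IsF4Pair x y) : y ^ 5 = -x ^ 5 := by
  linear_combination (norm := noncomm_ring) y ^ 2 * h.pow_three_eq + h.sq_mul_pow_three

theorem mul_pow_three_mul (h : IsF4Pair x y) : y * x ^ 3 * y = -x ^ 5 := by
  linear_combination (norm := noncomm_ring) y * h.pow_three_eq.symm * y + h.pow_five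

theorem pow_three_mul_sq (h : IsF4Pair x y) : x ^ 3 * y ^ 2 = -x ^ 5 := by
  linear_combination (norm := noncomm_ring) h.pow_three_eq.symm * y ^ 2 + h.pow_five

theorem mul_sq_mul_sq (h : IsF4Pair x y) : x * y ^ 2 * x ^ 2 = -x ^ 5 := by
  linear_combination (norm := noncomm_ring) h.mul_sq * x ^ 2 - x * h.xyx * x

theorem sq_mul_sq_mul (h : IsF4Pair x y) : x ^ 2 * y ^ 2 * x = -x ^ 5 := by
  linear_combination (norm := noncomm_ring) x * h.mul_sq * x - x ^ 2 * h.xyx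

end IsF4Pair

theorem isF4Pair_Rx_Ry (K : Type) [Field K] : IsF4Pair (Rx K) (Ry K) where
  xyx := by
    simpa only [map_mul, map_zero, Rx, Ry] using RingQuot.mkAlgHom_rel K (F4Rel.xyx (K := K))
  yxy := by
    simpa only [map_mul, map_zero, Rx, Ry] using RingQuot.mkAlgHom_rel K (F4Rel.yxy (K := K))
  sq := by
    simpa only [map_pow, map_add, map_zero, Rx, Ry] using RingQuot.mkAlgHom_rel K (F4Rel.sq (K := K))

theorem stmt7 (K : Type) [Field K] :
    (Ry K) ^ 5 = -(Rx K) ^ 5 ∧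
    (Ry K) ^ 2 * (Rx K) ^ 3 = -(Rx K) ^ 5 ∧
    Ry K * (Rx K) ^ 3 * Ry K = -(Rx K) ^ 5 ∧
    (Rx K) ^ 3 * (Ry K) ^ 2 = -(Rx K) ^ 5 ∧
    Rx K * (Ry K) ^ 2 * (Rx K) ^ 2 = -(Rx K) ^ 5 ∧
    (Rx K) ^ 2 * (Ry K) ^ 2 * Rx K = -(Rx K) ^ 5 := by
  have h := isF4Pair_Rx_Ry K
  exact ⟨h.pow_five, h.sq_mul_pow_three, h.mul_pow_three_mul, h.pow_three_mul_sq,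
    h.mul_sq_mul_sq, h.sq_mul_sq_mul⟩
end

section
/- In R(F₄) = K⟨x,y⟩/(xyx, yxy, (x+y)²), the identities y²x²y = yx²y² = y³x² = xy³x = x²y³ = x⁵ hold. -/
/-- In any ring where `XYX = 0`, `YXY = 0`, and `X² + XY + YX + Y² = 0`, the
five monomial identities hold. -/
theorem f4_key {R : Type*} [Ring R] (X Y : R) (h1 : X*Y*X = 0) (h2 : Y*X*Y = 0)
    (h3 : X*X + X*Y + Y*X + Y*Y = 0) :
    Y*Y*X*X*Y = X*X*X*X*X ∧
    Y*X*X*Y*Y = X*X*X*X*X ∧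
    Y*Y*Y*X*X = X*X*X*X*X ∧
    X*Y*Y*Y*X = X*X*X*X*X ∧
    X*X*Y*Y*Y = X*X*X*X*X := by
  have hB : X*X*X + Y*X*X + Y*Y*X = 0 := by
    calc X*X*X + Y*X*X + Y*Y*X
        = (X*X + X*Y + Y*X + Y*Y)*X - X*Y*X := by noncomm_ring
      _ = 0 := by rw [h3, h1]; noncomm_ring
  have hC : Y*X*X + Y*Y*X + Y*Y*Y = 0 := by
    calc Y*X*X + Y*Y*X + Y*Y*Y
        = Y*(X*X + X*Y + Y*X + Y*Y) - Y*X*Y := by noncomm_ring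
      _ = 0 := by rw [h3, h2]; noncomm_ring
  have hD : X*X*Y + X*Y*Y + Y*Y*Y = 0 := by
    calc X*X*Y + X*Y*Y + Y*Y*Y
        = (X*X + X*Y + Y*X + Y*Y)*Y - Y*X*Y := by noncomm_ring
      _ = 0 := by rw [h3, h2]; noncomm_ring
  have hE : X*X*X = Y*Y*Y := by
    calc X*X*X = (X*X*X + Y*X*X + Y*Y*X) - (Y*X*X + Y*Y*X + Y*Y*Y) + Y*Y*Y := by
          noncomm_ring
      _ = Y*Y*Y := by rw [hB, hC]; noncomm_ring
  have h7 : X*Y*Y*X + X*X*X*X = 0 := by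
    calc X*Y*Y*X + X*X*X*X
        = X*(X*X + X*Y + Y*X + Y*Y)*X - X*(X*Y*X) - (X*Y*X)*X := by noncomm_ring
      _ = 0 := by rw [h3, h1]; noncomm_ring
  have h8 : Y*X*X*Y + Y*Y*Y*Y = 0 := by
    calc Y*X*X*Y + Y*Y*Y*Y
        = Y*(X*X + X*Y + Y*X + Y*Y)*Y - Y*(Y*X*Y) - (Y*X*Y)*Y := by noncomm_ring
      _ = 0 := by rw [h3, h2]; noncomm_ring
  have h9 : Y*X*X*X*X = 0 := by
    calc Y*X*X*X*X
        = Y*(X*Y*Y*X + X*X*X*X) - (Y*X*Y)*(Y*X) := by noncomm_ring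
      _ = 0 := by rw [h7, h2]; noncomm_ring
  have h10 : X*X*X*X*Y = 0 := by
    calc X*X*X*X*Y
        = (X*Y*Y*X + X*X*X*X)*Y - (X*Y)*(Y*X*Y) := by noncomm_ring
      _ = 0 := by rw [h7, h2]; noncomm_ring
  -- y²x³ = -x⁵
  have e1 : Y*Y*X*X*X = -(X*X*X*X*X) := by
    have h13 : X*X*X*X*X + Y*X*X*X*X + Y*Y*X*X*X = 0 := by
      calc X*X*X*X*X + Y*X*X*X*X + Y*Y*X*X*X
          = (X*X*X + Y*X*X + Y*Y*X)*(X*X) := by noncomm_ring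
        _ = 0 := by rw [hB]; noncomm_ring
    calc Y*Y*X*X*X
        = (X*X*X*X*X + Y*X*X*X*X + Y*Y*X*X*X) - X*X*X*X*X - Y*X*X*X*X := by
          noncomm_ring
      _ = -(X*X*X*X*X) := by rw [h13, h9]; noncomm_ring
  -- y⁵ = y²x³
  have h12 : Y*Y*Y*Y*Y = Y*Y*X*X*X := by
    calc Y*Y*Y*Y*Y = Y*Y*(Y*Y*Y) := by noncomm_ring
      _ = Y*Y*(X*X*X) := by rw [← hE]
      _ = Y*Y*X*X*X := by noncomm_ring
  have hy5 : Y*Y*Y*Y*Y = -(X*X*X*X*X) := by rw [h12, e1]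
  refine ⟨?_, ?_, ?_, ?_, ?_⟩
  · have h11 : Y*Y*X*X*Y + Y*Y*Y*Y*Y = 0 := by
      calc Y*Y*X*X*Y + Y*Y*Y*Y*Y = Y*(Y*X*X*Y + Y*Y*Y*Y) := by noncomm_ring
        _ = 0 := by rw [h8]; noncomm_ring
    calc Y*Y*X*X*Y
        = (Y*Y*X*X*Y + Y*Y*Y*Y*Y) - (Y*Y*Y*Y*Y) := by noncomm_ring
      _ = X*X*X*X*X := by rw [h11, hy5]; noncomm_ring
  · have h14 : Y*X*X*Y*Y + Y*Y*Y*Y*Y = 0 := by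
      calc Y*X*X*Y*Y + Y*Y*Y*Y*Y = (Y*X*X*Y + Y*Y*Y*Y)*Y := by noncomm_ring
        _ = 0 := by rw [h8]; noncomm_ring
    calc Y*X*X*Y*Y
        = (Y*X*X*Y*Y + Y*Y*Y*Y*Y) - (Y*Y*Y*Y*Y) := by noncomm_ring
      _ = X*X*X*X*X := by rw [h14, hy5]; noncomm_ring
  · calc Y*Y*Y*X*X = (Y*Y*Y)*(X*X) := by noncomm_ring
      _ = (X*X*X)*(X*X) := by rw [← hE]
      _ = X*X*X*X*X := by noncomm_ring
  · calc X*Y*Y*Y*X = X*(Y*Y*Y)*X := by noncomm_ring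
      _ = X*(X*X*X)*X := by rw [← hE]
      _ = X*X*X*X*X := by noncomm_ring
  · calc X*X*Y*Y*Y = (X*X)*(Y*Y*Y) := by noncomm_ring
      _ = (X*X)*(X*X*X) := by rw [← hE]
      _ = X*X*X*X*X := by noncomm_ring

theorem stmt8 (K : Type) [Field K] :
    (Ry K) ^ 2 * (Rx K) ^ 2 * Ry K = (Rx K) ^ 5 ∧
    Ry K * (Rx K) ^ 2 * (Ry K) ^ 2 = (Rx K) ^ 5 ∧
    (Ry K) ^ 3 * (Rx K) ^ 2 = (Rx K) ^ 5 ∧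
    Rx K * (Ry K) ^ 3 * Rx K = (Rx K) ^ 5 ∧
    (Rx K) ^ 2 * (Ry K) ^ 3 = (Rx K) ^ 5 := by
  set X := Rx K with hX
  set Y := Ry K with hY
  have h1 : X*Y*X = 0 := by
    have := RingQuot.mkAlgHom_rel K (F4Rel.xyx (K := K))
    simpa [Rx, Ry, hX, hY, map_mul, map_zero] using this
  have h2 : Y*X*Y = 0 := by
    have := RingQuot.mkAlgHom_rel K (F4Rel.yxy (K := K))
    simpa [Rx, Ry, hX, hY, map_mul, map_zero] using this
  have h3 : X*X + X*Y + Y*X + Y*Y = 0 := by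
    have hs : (X + Y)^2 = 0 := by
      have := RingQuot.mkAlgHom_rel K (F4Rel.sq (K := K))
      simpa [Rx, Ry, hX, hY, map_pow, map_add, map_zero] using this
    calc X*X + X*Y + Y*X + Y*Y = (X + Y)^2 := by noncomm_ring
      _ = 0 := hs
  obtain ⟨g1, g2, g3, g4, g5⟩ := f4_key X Y h1 h2 h3
  refine ⟨?_, ?_, ?_, ?_, ?_⟩
  · calc Y^2 * X^2 * Y = Y*Y*X*X*Y := by noncomm_ring
      _ = X*X*X*X*X := g1
      _ = X^5 := by noncomm_ring
  · calc Y * X^2 * Y^2 = Y*X*X*Y*Y := by noncomm_ring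
      _ = X*X*X*X*X := g2
      _ = X^5 := by noncomm_ring
  · calc Y^3 * X^2 = Y*Y*Y*X*X := by noncomm_ring
      _ = X*X*X*X*X := g3
      _ = X^5 := by noncomm_ring
  · calc X * Y^3 * X = X*Y*Y*Y*X := by noncomm_ring
      _ = X*X*X*X*X := g4
      _ = X^5 := by noncomm_ring
  · calc X^2 * Y^3 = X*X*Y*Y*Y := by noncomm_ring
      _ = X*X*X*X*X := g5
      _ = X^5 := by noncomm_ring
end

section
/- In R(F₄) = K⟨x,y⟩/(xyx, yxy, (x+y)²), the element x⁵ satisfies x·x⁵ = x⁵·x = x⁵·y = y·x⁵ = 0; in particular x⁶ = 0. -/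
theorem stmt9 (K : Type) [Field K] :
    Rx K * (Rx K) ^ 5 = 0 ∧ (Rx K) ^ 5 * Rx K = 0 ∧
    (Rx K) ^ 5 * Ry K = 0 ∧ Ry K * (Rx K) ^ 5 = 0 ∧
    (Rx K) ^ 6 = 0 := by
  set a := Rx K with ha
  set b := Ry K with hb
  have h1 : a * b * a = 0 := by
    have := RingQuot.mkAlgHom_rel K (F4Rel.xyx (K := K))
    simpa [Rx, Ry, ha, hb, map_mul, map_zero] using this
  have h2 : b * a * b = 0 := by
    have := RingQuot.mkAlgHom_rel K (F4Rel.yxy (K := K))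
    simpa [Rx, Ry, ha, hb, map_mul, map_zero] using this
  have h3 : (a + b) ^ 2 = 0 := by
    have := RingQuot.mkAlgHom_rel K (F4Rel.sq (K := K))
    simpa [Rx, Ry, ha, hb, map_pow, map_add, map_zero] using this
  have hr : a * a + a * b + b * a + b * b = 0 := by
    rw [← h3]; noncomm_ring
  -- a³ = b³
  have e1 : a ^ 3 = b ^ 3 := by
    have key : a ^ 3 - b ^ 3 =
        a * (a * a + a * b + b * a + b * b)
          - (a * a + a * b + b * a + b * b) * b - a * b * a + b * a * b := by
      noncomm_ring
    rw [hr, h1, h2] at key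
    simp only [mul_zero, zero_mul, sub_zero, add_zero, zero_sub, neg_zero, sub_eq_zero] at key
    exact key
  -- a·b⁴ = 0
  have hC : a * b ^ 4 = 0 := by
    calc a * b ^ 4 = a * b * b ^ 3 := by noncomm_ring
      _ = a * b * a ^ 3 := by rw [e1]
      _ = (a * b * a) * a ^ 2 := by noncomm_ring
      _ = 0 := by rw [h1, zero_mul]
  -- a⁵ + b⁵ = 0
  have hD : a ^ 5 + b ^ 5 = 0 := by
    have z : a * a * b ^ 3 + a * b ^ 4 + (b * a * b) * b ^ 2 + b ^ 5 = 0 := by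
      rw [show a * a * b ^ 3 + a * b ^ 4 + (b * a * b) * b ^ 2 + b ^ 5
            = (a * a + a * b + b * a + b * b) * b ^ 3 from by noncomm_ring,
        hr, zero_mul]
    rw [hC, h2, zero_mul, add_zero, add_zero] at z
    rw [show a ^ 5 = a * a * a ^ 3 from by noncomm_ring, e1]
    exact z
  -- b⁵·a = 0
  have hE : b ^ 5 * a = 0 := by
    calc b ^ 5 * a = b * b * b ^ 3 * a := by noncomm_ring
      _ = b * b * a ^ 3 * a := by rw [e1]
      _ = b * b * a * a ^ 3 := by noncomm_ring
      _ = b * b * a * b ^ 3 := by rw [e1]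
      _ = b * (b * a * b) * b ^ 2 := by noncomm_ring
      _ = 0 := by rw [h2, mul_zero, zero_mul]
  have hF1 : a ^ 5 * a = 0 := by
    have z : (a ^ 5 + b ^ 5) * a = 0 := by rw [hD, zero_mul]
    rw [show (a ^ 5 + b ^ 5) * a = a ^ 5 * a + b ^ 5 * a from by noncomm_ring,
      hE, add_zero] at z
    exact z
  have hF2 : a * a ^ 5 = 0 := by
    have z : a * (a ^ 5 + b ^ 5) = 0 := by rw [hD, mul_zero]
    rw [show a * (a ^ 5 + b ^ 5) = a * a ^ 5 + (a * b ^ 4) * b from by noncomm_ring,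
      hC, zero_mul, add_zero] at z
    exact z
  have hb6 : b ^ 6 = 0 := by
    calc b ^ 6 = b ^ 3 * b ^ 3 := by noncomm_ring
      _ = a ^ 3 * a ^ 3 := by rw [e1]
      _ = a * a ^ 5 := by noncomm_ring
      _ = 0 := hF2
  have hG : a ^ 5 * b = 0 := by
    have z : (a ^ 5 + b ^ 5) * b = 0 := by rw [hD, zero_mul]
    rw [show (a ^ 5 + b ^ 5) * b = a ^ 5 * b + b ^ 6 from by noncomm_ring,
      hb6, add_zero] at z
    exact z
  have hH : b * a ^ 5 = 0 := by
    have z : b * (a ^ 5 + b ^ 5) = 0 := by rw [hD, mul_zero]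
    rw [show b * (a ^ 5 + b ^ 5) = b * a ^ 5 + b ^ 6 from by noncomm_ring,
      hb6, add_zero] at z
    exact z
  refine ⟨hF2, hF1, hG, hH, ?_⟩
  calc a ^ 6 = a * a ^ 5 := by noncomm_ring
    _ = 0 := hF2
end

section
/- In R(F₄) = K⟨x,y⟩/(xyx, yxy, (x+y)²), every product of six elements each equal to x or y is zero, i.e., the image of every word of length 6 in x,y vanishes. -/
set_option maxHeartbeats 4000000 in
theorem word6 {R : Type*} [Ring R] (x y : R) (hx : x*y*x = 0) (hy : y*x*y = 0)
    (hq : (x+y)^2 = 0) :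
    ∀ a b c d e f : Bool,
      (cond a x y) * ((cond b x y) * ((cond c x y) * ((cond d x y) * ((cond e x y) * (cond f x y))))) = 0 := by
  intro a b c d e f
  cases a <;> cases b <;> cases c <;> cases d <;> cases e <;> cases f <;>
    simp only [Bool.cond_false, Bool.cond_true]
  · have h : y*(y*(y*(y*(y*(y))))) = (x*y*x)*x*y*y - (y*x*y)*y*y*y + x*(x*y*x)*x*y + x*(x*y*x)*y*y + x*(y*x*y)*y*y + x*y*(y*x*y)*y + x*x*y*(y*x*y) + ((x+y)^2)*y*y*y*y - x*((x+y)^2)*x*y*y - x*((x+y)^2)*y*y*y - x*x*((x+y)^2)*x*y + x*x*x*((x+y)^2)*y := by first | noncomm_ring | simp only [mul_assoc]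
    rw [h]; simp [hx, hy, hq]
  · have h : y*(y*(y*(y*(y*(x))))) = -y*(y*x*y)*y*x + y*x*(y*x*y)*x + y*x*x*(x*y*x) + ((x+y)^2)*x*y*y*x + ((x+y)^2)*y*y*y*x - x*((x+y)^2)*y*y*x - y*x*((x+y)^2)*y*x := by first | noncomm_ring | simp only [mul_assoc]
    rw [h]; simp [hx, hy, hq]
  · have h : y*(y*(y*(y*(x*(y))))) = y*y*y*(y*x*y) := by first | noncomm_ring | simp only [mul_assoc]
    rw [h]; simp [hx, hy, hq]
  · have h : y*(y*(y*(y*(x*(x))))) = -(y*x*y)*y*x*x + x*x*(x*y*x)*x + x*y*(x*y*x)*x + ((x+y)^2)*y*y*x*x - x*((x+y)^2)*y*x*x := by first | noncomm_ring | simp only [mul_assoc]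
    rw [h]; simp [hx, hy, hq]
  · have h : y*(y*(y*(x*(y*(y))))) = -x*(x*y*x)*y*y - x*y*(y*x*y)*y - y*x*(y*x*y)*y + ((x+y)^2)*y*x*y*y := by first | noncomm_ring | simp only [mul_assoc]
    rw [h]; simp [hx, hy, hq]
  · have h : y*(y*(y*(x*(y*(x))))) = y*y*(y*x*y)*x := by first | noncomm_ring | simp only [mul_assoc]
    rw [h]; simp [hx, hy, hq]
  · have h : y*(y*(y*(x*(x*(y))))) = (x*y*x)*x*x*y - x*(x*y*x)*x*y - y*(x*y*x)*x*y - x*x*(x*y*x)*y - x*x*y*(y*x*y) + ((x+y)^2)*y*x*x*y - x*((x+y)^2)*x*x*y + x*x*((x+y)^2)*x*y := by first | noncomm_ring | simp only [mul_assoc]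
    rw [h]; simp [hx, hy, hq]
  · have h : y*(y*(y*(x*(x*(x))))) = (x*y*x)*x*x*x - (y*x*y)*x*x*x - (y*x*y)*y*y*x + x*(y*x*y)*y*x + y*(y*x*y)*y*x - x*x*(x*y*x)*x - y*x*(y*x*y)*x - x*x*x*(x*y*x) - y*x*x*(x*y*x) - ((x+y)^2)*x*y*y*x + ((x+y)^2)*y*x*x*x - x*((x+y)^2)*x*x*x + y*x*((x+y)^2)*y*x + x*x*x*((x+y)^2)*x := by first | noncomm_ring | simp only [mul_assoc]
    rw [h]; simp [hx, hy, hq]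
  · have h : y*(y*(x*(y*(y*(y))))) = y*(y*x*y)*y*y := by first | noncomm_ring | simp only [mul_assoc]
    rw [h]; simp [hx, hy, hq]
  · have h : y*(y*(x*(y*(y*(x))))) = y*(y*x*y)*y*x := by first | noncomm_ring | simp only [mul_assoc]
    rw [h]; simp [hx, hy, hq]
  · have h : y*(y*(x*(y*(x*(y))))) = y*y*x*(y*x*y) := by first | noncomm_ring | simp only [mul_assoc]
    rw [h]; simp [hx, hy, hq]
  · have h : y*(y*(x*(y*(x*(x))))) = -x*x*(x*y*x)*x - x*y*(x*y*x)*x - y*x*(x*y*x)*x + ((x+y)^2)*x*y*x*x := by first | noncomm_ring | simp only [mul_assoc]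
    rw [h]; simp [hx, hy, hq]
  · have h : y*(y*(x*(x*(y*(y))))) = -(x*y*x)*x*y*y + (y*x*y)*y*y*y - x*(x*y*x)*x*y - x*(y*x*y)*y*y - y*(y*x*y)*y*y + y*x*(y*x*y)*y - x*x*y*(y*x*y) + ((x+y)^2)*x*x*y*y + ((x+y)^2)*x*y*y*y + x*x*((x+y)^2)*x*y - y*x*((x+y)^2)*y*y - x*x*x*((x+y)^2)*y := by first | noncomm_ring | simp only [mul_assoc]
    rw [h]; simp [hx, hy, hq]
  · have h : y*(y*(x*(x*(y*(x))))) = y*y*x*(x*y*x) := by first | noncomm_ring | simp only [mul_assoc]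
    rw [h]; simp [hx, hy, hq]
  · have h : y*(y*(x*(x*(x*(y))))) = -(x*y*x)*x*x*y + x*(x*y*x)*x*y + y*(x*y*x)*x*y + x*x*(x*y*x)*y + y*x*(x*y*x)*y + x*x*y*(y*x*y) + y*x*y*(y*x*y) + ((x+y)^2)*x*x*x*y - x*x*((x+y)^2)*x*y - y*x*((x+y)^2)*x*y := by first | noncomm_ring | simp only [mul_assoc]
    rw [h]; simp [hx, hy, hq]
  · have h : y*(y*(x*(x*(x*(x))))) = -(x*y*x)*x*x*x + (y*x*y)*x*x*x + (y*x*y)*y*x*x + (y*x*y)*y*y*x - x*(y*x*y)*y*x - y*(y*x*y)*y*x + x*x*(x*y*x)*x + y*x*(x*y*x)*x + y*x*(y*x*y)*x + x*x*x*(x*y*x) + y*x*x*(x*y*x) + ((x+y)^2)*x*x*x*x + ((x+y)^2)*x*y*y*x - y*x*((x+y)^2)*x*x - y*x*((x+y)^2)*y*x - x*x*x*((x+y)^2)*x := by first | noncomm_ring | simp only [mul_assoc]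
    rw [h]; simp [hx, hy, hq]
  · have h : y*(x*(y*(y*(y*(y))))) = (y*x*y)*y*y*y := by first | noncomm_ring | simp only [mul_assoc]
    rw [h]; simp [hx, hy, hq]
  · have h : y*(x*(y*(y*(y*(x))))) = (y*x*y)*y*y*x := by first | noncomm_ring | simp only [mul_assoc]
    rw [h]; simp [hx, hy, hq]
  · have h : y*(x*(y*(y*(x*(y))))) = y*x*y*(y*x*y) := by first | noncomm_ring | simp only [mul_assoc]
    rw [h]; simp [hx, hy, hq]
  · have h : y*(x*(y*(y*(x*(x))))) = (y*x*y)*y*x*x := by first | noncomm_ring | simp only [mul_assoc]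
    rw [h]; simp [hx, hy, hq]
  · have h : y*(x*(y*(x*(y*(y))))) = y*x*(y*x*y)*y := by first | noncomm_ring | simp only [mul_assoc]
    rw [h]; simp [hx, hy, hq]
  · have h : y*(x*(y*(x*(y*(x))))) = y*x*(y*x*y)*x := by first | noncomm_ring | simp only [mul_assoc]
    rw [h]; simp [hx, hy, hq]
  · have h : y*(x*(y*(x*(x*(y))))) = y*(x*y*x)*x*y := by first | noncomm_ring | simp only [mul_assoc]
    rw [h]; simp [hx, hy, hq]
  · have h : y*(x*(y*(x*(x*(x))))) = (y*x*y)*x*x*x := by first | noncomm_ring | simp only [mul_assoc]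
    rw [h]; simp [hx, hy, hq]
  · have h : y*(x*(x*(y*(y*(y))))) = -(x*y*x)*x*y*y - x*(x*y*x)*x*y - x*(x*y*x)*y*y - x*(y*x*y)*y*y - y*(y*x*y)*y*y - x*y*(y*x*y)*y - x*x*y*(y*x*y) + ((x+y)^2)*x*y*y*y + x*((x+y)^2)*x*y*y + x*x*((x+y)^2)*x*y - x*x*x*((x+y)^2)*y := by first | noncomm_ring | simp only [mul_assoc]
    rw [h]; simp [hx, hy, hq]
  · have h : y*(x*(x*(y*(y*(x))))) = -(y*x*y)*y*y*x - y*x*(y*x*y)*x - y*x*x*(x*y*x) + y*x*((x+y)^2)*y*x := by first | noncomm_ring | simp only [mul_assoc]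
    rw [h]; simp [hx, hy, hq]
  · have h : y*(x*(x*(y*(x*(y))))) = y*x*(x*y*x)*y := by first | noncomm_ring | simp only [mul_assoc]
    rw [h]; simp [hx, hy, hq]
  · have h : y*(x*(x*(y*(x*(x))))) = y*x*(x*y*x)*x := by first | noncomm_ring | simp only [mul_assoc]
    rw [h]; simp [hx, hy, hq]
  · have h : y*(x*(x*(x*(y*(y))))) = (x*y*x)*x*y*y - (y*x*y)*y*y*y + x*(x*y*x)*x*y + x*(x*y*x)*y*y + x*(y*x*y)*y*y + y*(y*x*y)*y*y + x*y*(y*x*y)*y - y*x*(y*x*y)*y + x*x*y*(y*x*y) - ((x+y)^2)*x*y*y*y - x*((x+y)^2)*x*y*y - x*x*((x+y)^2)*x*y + y*x*((x+y)^2)*y*y + x*x*x*((x+y)^2)*y := by first | noncomm_ring | simp only [mul_assoc]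
    rw [h]; simp [hx, hy, hq]
  · have h : y*(x*(x*(x*(y*(x))))) = y*x*x*(x*y*x) := by first | noncomm_ring | simp only [mul_assoc]
    rw [h]; simp [hx, hy, hq]
  · have h : y*(x*(x*(x*(x*(y))))) = -y*(x*y*x)*x*y - y*x*(x*y*x)*y - y*x*y*(y*x*y) + y*x*((x+y)^2)*x*y := by first | noncomm_ring | simp only [mul_assoc]
    rw [h]; simp [hx, hy, hq]
  · have h : y*(x*(x*(x*(x*(x))))) = -(y*x*y)*x*x*x - (y*x*y)*y*x*x - y*x*(x*y*x)*x + y*x*((x+y)^2)*x*x := by first | noncomm_ring | simp only [mul_assoc]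
    rw [h]; simp [hx, hy, hq]
  · have h : x*(y*(y*(y*(y*(y))))) = -(x*y*x)*x*y*y - x*(y*x*y)*y*y - x*y*(y*x*y)*y + x*((x+y)^2)*x*y*y + x*((x+y)^2)*y*y*y - x*x*((x+y)^2)*y*y := by first | noncomm_ring | simp only [mul_assoc]
    rw [h]; simp [hx, hy, hq]
  · have h : x*(y*(y*(y*(y*(x))))) = x*(x*y*x)*y*x - x*(y*x*y)*y*x + x*x*x*(x*y*x) + x*((x+y)^2)*y*y*x - x*x*((x+y)^2)*y*x := by first | noncomm_ring | simp only [mul_assoc]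
    rw [h]; simp [hx, hy, hq]
  · have h : x*(y*(y*(y*(x*(y))))) = x*y*y*(y*x*y) := by first | noncomm_ring | simp only [mul_assoc]
    rw [h]; simp [hx, hy, hq]
  · have h : x*(y*(y*(y*(x*(x))))) = -(y*x*y)*y*y*x + x*(x*y*x)*x*x + x*(y*x*y)*y*x + y*(y*x*y)*y*x - x*x*(x*y*x)*x - x*y*(x*y*x)*x - y*x*(y*x*y)*x - x*x*x*(x*y*x) - y*x*x*(x*y*x) - ((x+y)^2)*x*y*y*x + x*((x+y)^2)*y*x*x - x*x*((x+y)^2)*x*x + y*x*((x+y)^2)*y*x + x*x*x*((x+y)^2)*x := by first | noncomm_ring | simp only [mul_assoc]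
    rw [h]; simp [hx, hy, hq]
  · have h : x*(y*(y*(x*(y*(y))))) = x*y*(y*x*y)*y := by first | noncomm_ring | simp only [mul_assoc]
    rw [h]; simp [hx, hy, hq]
  · have h : x*(y*(y*(x*(y*(x))))) = x*y*(y*x*y)*x := by first | noncomm_ring | simp only [mul_assoc]
    rw [h]; simp [hx, hy, hq]
  · have h : x*(y*(y*(x*(x*(y))))) = -(x*y*x)*x*x*y + x*x*(x*y*x)*y + x*x*y*(y*x*y) + x*((x+y)^2)*x*x*y - x*x*((x+y)^2)*x*y := by first | noncomm_ring | simp only [mul_assoc]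
    rw [h]; simp [hx, hy, hq]
  · have h : x*(y*(y*(x*(x*(x))))) = -(x*y*x)*x*x*x + (y*x*y)*y*y*x - x*(x*y*x)*x*x - x*(y*x*y)*y*x - y*(y*x*y)*y*x + x*x*(x*y*x)*x + y*x*(y*x*y)*x + x*x*x*(x*y*x) + y*x*x*(x*y*x) + ((x+y)^2)*x*y*y*x + x*((x+y)^2)*x*x*x - y*x*((x+y)^2)*y*x - x*x*x*((x+y)^2)*x := by first | noncomm_ring | simp only [mul_assoc]
    rw [h]; simp [hx, hy, hq]
  · have h : x*(y*(x*(y*(y*(y))))) = x*(y*x*y)*y*y := by first | noncomm_ring | simp only [mul_assoc]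
    rw [h]; simp [hx, hy, hq]
  · have h : x*(y*(x*(y*(y*(x))))) = x*(y*x*y)*y*x := by first | noncomm_ring | simp only [mul_assoc]
    rw [h]; simp [hx, hy, hq]
  · have h : x*(y*(x*(y*(x*(y))))) = (x*y*x)*y*x*y := by first | noncomm_ring | simp only [mul_assoc]
    rw [h]; simp [hx, hy, hq]
  · have h : x*(y*(x*(y*(x*(x))))) = x*y*(x*y*x)*x := by first | noncomm_ring | simp only [mul_assoc]
    rw [h]; simp [hx, hy, hq]
  · have h : x*(y*(x*(x*(y*(y))))) = (x*y*x)*x*y*y := by first | noncomm_ring | simp only [mul_assoc]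
    rw [h]; simp [hx, hy, hq]
  · have h : x*(y*(x*(x*(y*(x))))) = (x*y*x)*x*y*x := by first | noncomm_ring | simp only [mul_assoc]
    rw [h]; simp [hx, hy, hq]
  · have h : x*(y*(x*(x*(x*(y))))) = (x*y*x)*x*x*y := by first | noncomm_ring | simp only [mul_assoc]
    rw [h]; simp [hx, hy, hq]
  · have h : x*(y*(x*(x*(x*(x))))) = (x*y*x)*x*x*x := by first | noncomm_ring | simp only [mul_assoc]
    rw [h]; simp [hx, hy, hq]
  · have h : x*(x*(y*(y*(y*(y))))) = -x*(x*y*x)*x*y - x*(x*y*x)*y*y - x*x*y*(y*x*y) + x*x*((x+y)^2)*x*y + x*x*((x+y)^2)*y*y - x*x*x*((x+y)^2)*y := by first | noncomm_ring | simp only [mul_assoc]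
    rw [h]; simp [hx, hy, hq]
  · have h : x*(x*(y*(y*(y*(x))))) = -(y*x*y)*y*y*x - x*(x*y*x)*y*x + x*(y*x*y)*y*x + y*(y*x*y)*y*x - y*x*(y*x*y)*x - x*x*x*(x*y*x) - y*x*x*(x*y*x) - ((x+y)^2)*x*y*y*x + x*x*((x+y)^2)*y*x + y*x*((x+y)^2)*y*x := by first | noncomm_ring | simp only [mul_assoc]
    rw [h]; simp [hx, hy, hq]
  · have h : x*(x*(y*(y*(x*(y))))) = x*x*y*(y*x*y) := by first | noncomm_ring | simp only [mul_assoc]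
    rw [h]; simp [hx, hy, hq]
  · have h : x*(x*(y*(y*(x*(x))))) = (y*x*y)*y*y*x - x*(x*y*x)*x*x - x*(y*x*y)*y*x - y*(y*x*y)*y*x + y*x*(y*x*y)*x + x*x*x*(x*y*x) + y*x*x*(x*y*x) + ((x+y)^2)*x*y*y*x + x*x*((x+y)^2)*x*x - y*x*((x+y)^2)*y*x - x*x*x*((x+y)^2)*x := by first | noncomm_ring | simp only [mul_assoc]
    rw [h]; simp [hx, hy, hq]
  · have h : x*(x*(y*(x*(y*(y))))) = x*(x*y*x)*y*y := by first | noncomm_ring | simp only [mul_assoc]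
    rw [h]; simp [hx, hy, hq]
  · have h : x*(x*(y*(x*(y*(x))))) = x*(x*y*x)*y*x := by first | noncomm_ring | simp only [mul_assoc]
    rw [h]; simp [hx, hy, hq]
  · have h : x*(x*(y*(x*(x*(y))))) = x*(x*y*x)*x*y := by first | noncomm_ring | simp only [mul_assoc]
    rw [h]; simp [hx, hy, hq]
  · have h : x*(x*(y*(x*(x*(x))))) = x*(x*y*x)*x*x := by first | noncomm_ring | simp only [mul_assoc]
    rw [h]; simp [hx, hy, hq]
  · have h : x*(x*(x*(y*(y*(y))))) = (x*y*x)*x*y*y + x*(x*y*x)*x*y + x*(x*y*x)*y*y + x*y*(y*x*y)*y + x*x*y*(y*x*y) - x*((x+y)^2)*x*y*y - x*x*((x+y)^2)*x*y + x*x*x*((x+y)^2)*y := by first | noncomm_ring | simp only [mul_assoc]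
    rw [h]; simp [hx, hy, hq]
  · have h : x*(x*(x*(y*(y*(x))))) = (y*x*y)*y*y*x - x*(y*x*y)*y*x - y*(y*x*y)*y*x + y*x*(y*x*y)*x + y*x*x*(x*y*x) + ((x+y)^2)*x*y*y*x - y*x*((x+y)^2)*y*x := by first | noncomm_ring | simp only [mul_assoc]
    rw [h]; simp [hx, hy, hq]
  · have h : x*(x*(x*(y*(x*(y))))) = x*x*(x*y*x)*y := by first | noncomm_ring | simp only [mul_assoc]
    rw [h]; simp [hx, hy, hq]
  · have h : x*(x*(x*(y*(x*(x))))) = x*x*(x*y*x)*x := by first | noncomm_ring | simp only [mul_assoc]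
    rw [h]; simp [hx, hy, hq]
  · have h : x*(x*(x*(x*(y*(y))))) = -(x*y*x)*x*y*y - x*(x*y*x)*y*y - x*y*(y*x*y)*y + x*((x+y)^2)*x*y*y := by first | noncomm_ring | simp only [mul_assoc]
    rw [h]; simp [hx, hy, hq]
  · have h : x*(x*(x*(x*(y*(x))))) = x*x*x*(x*y*x) := by first | noncomm_ring | simp only [mul_assoc]
    rw [h]; simp [hx, hy, hq]
  · have h : x*(x*(x*(x*(x*(y))))) = -x*(x*y*x)*x*y - x*x*(x*y*x)*y - x*x*y*(y*x*y) + x*x*((x+y)^2)*x*y := by first | noncomm_ring | simp only [mul_assoc]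
    rw [h]; simp [hx, hy, hq]
  · have h : x*(x*(x*(x*(x*(x))))) = -(y*x*y)*y*y*x + x*(y*x*y)*y*x + y*(y*x*y)*y*x - x*x*(x*y*x)*x - y*x*(y*x*y)*x - x*x*x*(x*y*x) - y*x*x*(x*y*x) - ((x+y)^2)*x*y*y*x + y*x*((x+y)^2)*y*x + x*x*x*((x+y)^2)*x := by first | noncomm_ring | simp only [mul_assoc]
    rw [h]; simp [hx, hy, hq]

theorem stmt10 (K : Type) [Field K] (w : Fin 6 → Bool) :
    ((List.ofFn w).map (fun b => if b then Rx K else Ry K)).prod = 0 := by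
  have hx : Rx K * Ry K * Rx K = 0 := by
    have := RingQuot.mkAlgHom_rel K (F4Rel.xyx (K := K))
    simpa [Rx, Ry, map_mul] using this
  have hy : Ry K * Rx K * Ry K = 0 := by
    have := RingQuot.mkAlgHom_rel K (F4Rel.yxy (K := K))
    simpa [Rx, Ry, map_mul] using this
  have hq : (Rx K + Ry K) ^ 2 = 0 := by
    have := RingQuot.mkAlgHom_rel K (F4Rel.sq (K := K))
    simpa [Rx, Ry, map_add, map_pow] using this
  have hl : List.ofFn w = [w 0, w 1, w 2, w 3, w 4, w 5] := rfl
  rw [hl]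
  simpa [Bool.cond_eq_if] using word6 (Rx K) (Ry K) hx hy hq (w 0) (w 1) (w 2) (w 3) (w 4) (w 5)
end

section
/- The algebra R(F₄) = K⟨x,y⟩/(xyx, yxy, (x+y)²) is spanned over K by the twelve elements 1, x, y, x², xy, yx, x³, x²y, yx², x⁴, x³y, x⁵; in particular R(F₄) has dimension at most 12 over K. -/
/-! The relations force `y³ = x³`: expanding `y (x + y)² - (x + y)² x` leaves `y³ - x³` plus
the two cubic relators. From this one gets `y x³ = x³ y`, `y x² y = -x³ y`, `x⁴ y = 0` and
`x⁶ = 0`, which together with `y² = -x² - x y - y x` rewrite the product of each of the twelve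
words with `x` or with `y` into a combination of the twelve words. So their span is a right
ideal containing `1` in an algebra generated by `x` and `y`, i.e. the whole algebra. -/

open Submodule

structure IsF4Pair_s11 {A : Type*} [Ring A] (x y : A) : Prop where
  xyx : x * y * x = 0
  yxy : y * x * y = 0
  sq : (x + y) ^ 2 = 0

def f4NormalWords {A : Type*} [Monoid A] (x y : A) : Set A :=
  {1, x, y, x ^ 2, x * y, y * x, x ^ 3, x ^ 2 * y, y * x ^ 2, x ^ 4, x ^ 3 * y, x ^ 5}

theorem rank_span_f4NormalWords_le {K A : Type*} [Semiring K] [StrongRankCondition K]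
    [Semiring A] [Module K A] (x y : A) : Module.rank K (span K (f4NormalWords x y)) ≤ 12 := by
  classical
  have : f4NormalWords x y = ↑([1, x, y, x ^ 2, x * y, y * x, x ^ 3, x ^ 2 * y, y * x ^ 2,
      x ^ 4, x ^ 3 * y, x ^ 5].toFinset) := by
    ext; simp [f4NormalWords]
  rw [this]
  exact (rank_span_finset_le _).trans (by exact_mod_cast List.toFinset_card_le _)

theorem Submodule.span_eq_top_of_mul_mem {R A : Type*} [CommSemiring R] [Semiring A]
    [Algebra R A] {s t : Set A} (hs : Algebra.adjoin R s = ⊤) (one_mem : (1 : A) ∈ span R t)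
    (mul_mem : ∀ w ∈ t, ∀ g ∈ s, w * g ∈ span R t) : span R t = ⊤ := by
  set M := span R t
  have mul_gen (g : A) (hg : g ∈ s) (a : A) (ha : a ∈ M) : a * g ∈ M := by
    induction ha using Submodule.span_induction with
    | mem w hw => exact mul_mem w hw g hg
    | zero => rw [zero_mul]; exact M.zero_mem
    | add a b _ _ ha hb => rw [add_mul]; exact M.add_mem ha hb
    | smul r a _ ha => rw [smul_mul_assoc]; exact M.smul_mem r ha
  have mul_adjoin (b : A) (hb : b ∈ Algebra.adjoin R s) : ∀ a ∈ M, a * b ∈ M := by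
    induction hb using Algebra.adjoin_induction with
    | mem g hg => exact mul_gen g hg
    | algebraMap r =>
      intro a ha
      rw [← Algebra.commutes, ← Algebra.smul_def]
      exact M.smul_mem r ha
    | add b c _ _ hb hc =>
      intro a ha
      rw [mul_add]
      exact M.add_mem (hb a ha) (hc a ha)
    | mul b c _ _ hb hc =>
      intro a ha
      rw [← mul_assoc]
      exact hc _ (hb a ha)
  refine eq_top_iff'.mpr fun b => ?_
  simpa using mul_adjoin b (hs ▸ Algebra.mem_top) 1 one_mem

namespace IsF4Pair_s11

section Relations

variable {A : Type*} [Ring A] {x y : A}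

theorem y_mul_y (h : IsF4Pair_s11 x y) : y * y = -(x ^ 2) - x * y - y * x := sub_eq_zero.mp <| by
  rw [show y * y - (-(x ^ 2) - x * y - y * x) = (x + y) ^ 2 by noncomm_ring, h.sq]

theorem x_pow_succ_mul_y_mul_x (h : IsF4Pair_s11 x y) (k : ℕ) : x ^ (k + 1) * y * x = 0 := by
  rw [pow_succ, mul_assoc, mul_assoc, ← mul_assoc x y x, h.xyx, mul_zero]

theorem x_pow_succ_mul_y_mul_y (h : IsF4Pair_s11 x y) (k : ℕ) :
    x ^ (k + 1) * y * y = -x ^ (k + 3) - x ^ (k + 2) * y := by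
  rw [mul_assoc, h.y_mul_y, mul_sub, mul_sub, mul_neg, ← mul_assoc, ← mul_assoc,
    h.x_pow_succ_mul_y_mul_x, sub_zero, ← pow_add, ← pow_succ]

theorem y_cube (h : IsF4Pair_s11 x y) : y ^ 3 = x ^ 3 := sub_eq_zero.mp <| by
  rw [show y ^ 3 - x ^ 3 = y * (x + y) ^ 2 - (x + y) ^ 2 * x - y * x * y + x * y * x by
    noncomm_ring, h.sq, h.xyx, h.yxy]
  simp

theorem y_mul_x_cube (h : IsF4Pair_s11 x y) : y * x ^ 3 = x ^ 3 * y := by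
  rw [← h.y_cube, ← pow_succ', pow_succ]

theorem y_mul_x_sq_mul_y (h : IsF4Pair_s11 x y) : y * x ^ 2 * y = -(x ^ 3 * y) := by
  rw [← sub_eq_zero, sub_neg_eq_add, show y * x ^ 2 * y + x ^ 3 * y =
    y * (x + y) ^ 2 * y - y * x * y * y - y * (y * x * y) - (y ^ 3 - x ^ 3) * y by noncomm_ring,
    h.sq, h.yxy, h.y_cube]
  simp

theorem x_pow_four_mul_y (h : IsF4Pair_s11 x y) : x ^ 4 * y = 0 := by
  rw [show x ^ 4 * y = x * (x ^ 3 - y ^ 3) * y + x * y * (y ^ 3 - x ^ 3) + x * y * x * x ^ 2 by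
    noncomm_ring, h.y_cube, h.xyx]
  simp

theorem x_pow_six (h : IsF4Pair_s11 x y) : x ^ 6 = 0 :=
  calc x ^ 6 = x ^ 3 * y ^ 3 := by rw [h.y_cube, ← pow_add]
    _ = x ^ 3 * y * y * y := by noncomm_ring
    _ = -(x * (x ^ 4 * y)) - x ^ 4 * y * y := by rw [h.x_pow_succ_mul_y_mul_y 2]; noncomm_ring
    _ = 0 := by rw [h.x_pow_four_mul_y]; simp

end Relations

variable {K A : Type*} [Ring K] [Ring A] [Module K A] {x y : A}

theorem mul_x_mem_span (h : IsF4Pair_s11 x y) :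
    ∀ w ∈ f4NormalWords x y, w * x ∈ span K (f4NormalWords x y) := by
  set S := span K (f4NormalWords x y)
  have word {v : A} (hv : v ∈ f4NormalWords x y) : v ∈ S := subset_span hv
  simp only [f4NormalWords, Set.mem_insert_iff, Set.mem_singleton_iff, forall_eq_or_imp,
    forall_eq]
  refine ⟨?_, ?_, ?_, ?_, ?_, ?_, ?_, ?_, ?_, ?_, ?_, ?_⟩
  · rw [one_mul]; exact word (by simp [f4NormalWords])
  · rw [← pow_two]; exact word (by simp [f4NormalWords])
  · exact word (by simp [f4NormalWords])
  · rw [← pow_succ]; exact word (by simp [f4NormalWords])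
  · rw [h.xyx]; exact zero_mem _
  · rw [mul_assoc, ← pow_two]; exact word (by simp [f4NormalWords])
  · rw [← pow_succ]; exact word (by simp [f4NormalWords])
  · rw [h.x_pow_succ_mul_y_mul_x 1]; exact zero_mem _
  · rw [mul_assoc, ← pow_succ, h.y_mul_x_cube]; exact word (by simp [f4NormalWords])
  · rw [← pow_succ]; exact word (by simp [f4NormalWords])
  · rw [h.x_pow_succ_mul_y_mul_x 2]; exact zero_mem _
  · rw [← pow_succ, h.x_pow_six]; exact zero_mem _

theorem mul_y_mem_span (h : IsF4Pair_s11 x y) :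
    ∀ w ∈ f4NormalWords x y, w * y ∈ span K (f4NormalWords x y) := by
  set S := span K (f4NormalWords x y)
  have word {v : A} (hv : v ∈ f4NormalWords x y) : v ∈ S := subset_span hv
  simp only [f4NormalWords, Set.mem_insert_iff, Set.mem_singleton_iff, forall_eq_or_imp,
    forall_eq]
  refine ⟨?_, ?_, ?_, ?_, ?_, ?_, ?_, ?_, ?_, ?_, ?_, ?_⟩
  · rw [one_mul]; exact word (by simp [f4NormalWords])
  · exact word (by simp [f4NormalWords])
  · rw [h.y_mul_y]
    refine sub_mem (sub_mem (neg_mem (word ?_)) (word ?_)) (word ?_) <;> simp [f4NormalWords]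
  · exact word (by simp [f4NormalWords])
  · rw [show x * y * y = -x ^ 3 - x ^ 2 * y by simpa using h.x_pow_succ_mul_y_mul_y 0]
    refine sub_mem (neg_mem (word ?_)) (word ?_) <;> simp [f4NormalWords]
  · rw [h.yxy]; exact zero_mem _
  · exact word (by simp [f4NormalWords])
  · rw [h.x_pow_succ_mul_y_mul_y 1]
    refine sub_mem (neg_mem (word ?_)) (word ?_) <;> simp [f4NormalWords]
  · rw [h.y_mul_x_sq_mul_y]; exact neg_mem (word (by simp [f4NormalWords]))
  · rw [h.x_pow_four_mul_y]; exact zero_mem _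
  · rw [h.x_pow_succ_mul_y_mul_y 2, h.x_pow_four_mul_y, sub_zero]
    exact neg_mem (word (by simp [f4NormalWords]))
  · rw [pow_succ', mul_assoc, h.x_pow_four_mul_y, mul_zero]; exact zero_mem _

theorem span_f4NormalWords_eq_top {K A : Type*} [CommRing K] [Ring A] [Algebra K A] {x y : A}
    (h : IsF4Pair_s11 x y) (hgen : Algebra.adjoin K {x, y} = ⊤) :
    span K (f4NormalWords x y) = ⊤ := by
  refine span_eq_top_of_mul_mem hgen (subset_span (by simp [f4NormalWords])) ?_
  rintro w hw g (rfl | rfl)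
  exacts [h.mul_x_mem_span w hw, h.mul_y_mem_span w hw]

end IsF4Pair_s11

namespace RF4

variable (K : Type) [Field K]

theorem isF4Pair : IsF4Pair_s11 (Rx K) (Ry K) where
  xyx := by simpa [Rx, Ry] using RingQuot.mkAlgHom_rel K (F4Rel.xyx (K := K))
  yxy := by simpa [Rx, Ry] using RingQuot.mkAlgHom_rel K (F4Rel.yxy (K := K))
  sq := by simpa [Rx, Ry] using RingQuot.mkAlgHom_rel K (F4Rel.sq (K := K))

theorem adjoin_eq_top : Algebra.adjoin K {Rx K, Ry K} = ⊤ := by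
  have : ({Rx K, Ry K} : Set (RF4 K)) =
      RingQuot.mkAlgHom K (F4Rel K) '' Set.range (FreeAlgebra.ι K) := by
    rw [← Set.range_comp]
    ext; simp [Rx, Ry, or_comm]
  rw [this, Algebra.adjoin_image, FreeAlgebra.adjoin_range_ι, Algebra.map_top,
    AlgHom.range_eq_top]
  exact RingQuot.mkAlgHom_surjective K (F4Rel K)

end RF4

theorem stmt11 (K : Type) [Field K] :
    Submodule.span K
      ({1, Rx K, Ry K, (Rx K) ^ 2, Rx K * Ry K, Ry K * Rx K,
        (Rx K) ^ 3, (Rx K) ^ 2 * Ry K, Ry K * (Rx K) ^ 2,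
        (Rx K) ^ 4, (Rx K) ^ 3 * Ry K, (Rx K) ^ 5} : Set (RF4 K)) = ⊤ ∧
    Module.rank K (RF4 K) ≤ 12 := by
  have hspan := (RF4.isF4Pair K).span_f4NormalWords_eq_top (RF4.adjoin_eq_top K)
  refine ⟨hspan, ?_⟩
  rw [← rank_top, ← hspan]
  exact rank_span_f4NormalWords_le _ _
end

section
/- In R(F₄) = K⟨x,y⟩/(xyx, yxy, (x+y)²), for any coefficients θ₀,…,θ₇ ∈ K, setting f = θ₀x² + θ₁xy + θ₂yx + θ₃x³ + θ₄x²y + θ₅yx² + θ₆x⁴ + θ₇x³y, one has (x + y + f)² = (2θ₀−θ₁−θ₂)x³ + θ₀x²y + θ₀yx² + (2θ₃−θ₄−θ₅+θ₀²−θ₁θ₂)x⁴ + (2θ₃−θ₄−θ₅+θ₀θ₁+θ₀θ₂−θ₁θ₂)x³y + (2θ₆−2θ₇+2θ₀θ₃−2θ₁θ₅−2θ₂θ₄)x⁵. -/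
section derivations
variable {R : Type} [Ring R] (x y : R)
variable (h1 : x*y*x = 0) (h2 : y*x*y = 0) (h3 : (x+y)^2 = 0)

include h1 in
lemma a_xyx : x*(y*x) = 0 := by rw [← mul_assoc]; exact h1
include h1 in
lemma r_xyx (t : R) : x*(y*(x*t)) = 0 := by
  rw [show x*(y*(x*t)) = (x*y*x)*t by noncomm_ring, h1, zero_mul]
include h2 in
lemma a_yxy : y*(x*y) = 0 := by rw [← mul_assoc]; exact h2
include h2 in
lemma r_yxy (t : R) : y*(x*(y*t)) = 0 := by
  rw [show y*(x*(y*t)) = (y*x*y)*t by noncomm_ring, h2, zero_mul]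

include h3 in
lemma hyy : y*y = -(x*x) - x*y - y*x := by
  have h : (x*x + x*y + y*x) + y*y = 0 := by rw [← h3]; noncomm_ring
  have h' := eq_neg_of_add_eq_zero_right h
  rw [h']; abel

include h3 in
lemma hyy' (t : R) : y*(y*t) = -(x*(x*t)) - x*(y*t) - y*(x*t) := by
  rw [← mul_assoc, hyy x y h3]; noncomm_ring

include h1 h2 h3 in
lemma lD : y*(x*(x*y)) = -(x*(x*(x*y))) := by
  have k := hyy' x y h3 (x*y)
  rw [r_xyx x y h1, a_yxy x y h2, mul_zero] at k
  linear_combination (norm := noncomm_ring) k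

include h1 h2 h3 in
lemma lD' (t : R) : y*(x*(x*(y*t))) = -(x*(x*(x*(y*t)))) := by
  have k := congrArg (· * t) (lD x y h1 h2 h3)
  simpa [mul_assoc] using k

include h1 h2 h3 in
lemma lE : y*(x*(x*x)) = x*(x*(x*y)) := by
  have k2 : y*(x*(y*y)) = -(y*(x*(x*x))) - y*(x*(x*y)) - y*(x*(y*x)) := by
    rw [hyy x y h3]; noncomm_ring
  simp only [r_yxy x y h2, lD x y h1 h2 h3] at k2
  linear_combination (norm := noncomm_ring) k2

include h1 h2 h3 in
lemma lE' (t : R) : y*(x*(x*(x*t))) = x*(x*(x*(y*t))) := by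
  have k := congrArg (· * t) (lE x y h1 h2 h3)
  simpa [mul_assoc] using k

include h1 h2 h3 in
lemma lI : x*(x*(x*(x*y))) = 0 := by
  rw [← lE x y h1 h2 h3, r_xyx x y h1]

include h1 h2 h3 in
lemma lI' (t : R) : x*(x*(x*(x*(y*t)))) = 0 := by
  have k := congrArg (· * t) (lI x y h1 h2 h3)
  simpa [mul_assoc] using k

include h1 h2 h3 in
lemma y3 : y*(y*y) = x*(x*x) := by
  have k := hyy' x y h3 y
  have k2 : x*(y*y) = -(x*(x*x)) - x*(x*y) - x*(y*x) := by
    rw [hyy x y h3]; noncomm_ring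
  rw [k2, a_yxy x y h2, a_xyx x y h1] at k
  linear_combination (norm := noncomm_ring) k

include h1 h2 h3 in
lemma lH : x*(x*(x*(y*y))) = -(x*(x*(x*(x*x)))) := by
  rw [hyy x y h3,
    show x*(x*(x*(-(x*x) - x*y - y*x))) =
      -(x*(x*(x*(x*x)))) - x*(x*(x*(x*y))) - x*(x*(x*(y*x))) by noncomm_ring,
    lI x y h1 h2 h3, a_xyx x y h1]
  simp

include h1 h2 h3 in
lemma x5y : x*(x*(x*(x*(x*y)))) = 0 := by
  rw [lI x y h1 h2 h3, mul_zero]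

include h1 h2 h3 in
lemma x6 : x*(x*(x*(x*(x*x)))) = 0 := by
  have k2 : x*(x*(x*(y*(y*y)))) = (x*(x*(x*(y*y))))*y := by noncomm_ring
  rw [y3 x y h1 h2 h3, lH x y h1 h2 h3] at k2
  rw [k2, show (-(x*(x*(x*(x*x)))))*y = -(x*(x*(x*(x*(x*y))))) by noncomm_ring,
    x5y x y h1 h2 h3, neg_zero]

include h1 h2 h3 in
lemma x6' (t : R) : x*(x*(x*(x*(x*(x*t))))) = 0 := by
  have k := congrArg (· * t) (x6 x y h1 h2 h3)
  simpa [mul_assoc] using k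
end derivations

lemma key {K A : Type} [Field K] [Ring A] [Algebra K A] (x y : A)
    (h1 : x*y*x = 0) (h2 : y*x*y = 0) (h3 : (x+y)^2 = 0)
    (θ₀ θ₁ θ₂ θ₃ θ₄ θ₅ θ₆ θ₇ : K) :
    (x + y +
      (θ₀ • x ^ 2 + θ₁ • (x * y) + θ₂ • (y * x) +
       θ₃ • x ^ 3 + θ₄ • (x ^ 2 * y) + θ₅ • (y * x ^ 2) +
       θ₆ • x ^ 4 + θ₇ • (x ^ 3 * y))) ^ 2 =
    (2 * θ₀ - θ₁ - θ₂) • x ^ 3 + θ₀ • (x ^ 2 * y) +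
      θ₀ • (y * x ^ 2) +
      (2 * θ₃ - θ₄ - θ₅ + θ₀ ^ 2 - θ₁ * θ₂) • x ^ 4 +
      (2 * θ₃ - θ₄ - θ₅ + θ₀ * θ₁ + θ₀ * θ₂ - θ₁ * θ₂) • (x ^ 3 * y) +
      (2 * θ₆ - 2 * θ₇ + 2 * θ₀ * θ₃ - 2 * θ₁ * θ₅ - 2 * θ₂ * θ₄) • x ^ 5 := by
  simp only [show (x:A)^3 = x*(x*x) from by noncomm_ring,
    show (x:A)^4 = x*(x*(x*x)) from by noncomm_ring,
    show (x:A)^5 = x*(x*(x*(x*x))) from by noncomm_ring, pow_two]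
  simp only [mul_add, add_mul, mul_sub, sub_mul, mul_neg, neg_mul,
    smul_mul_assoc, mul_smul_comm, smul_smul, mul_assoc,
    a_xyx x y h1, r_xyx x y h1, a_yxy x y h2, r_yxy x y h2,
    hyy x y h3, hyy' x y h3,
    lD x y h1 h2 h3, lD' x y h1 h2 h3, lE x y h1 h2 h3, lE' x y h1 h2 h3,
    lI x y h1 h2 h3, lI' x y h1 h2 h3, x5y x y h1 h2 h3,
    x6 x y h1 h2 h3, x6' x y h1 h2 h3,
    smul_zero, mul_zero, zero_mul, add_zero, zero_add,
    smul_add, smul_neg, smul_sub, neg_neg, neg_zero]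
  module

theorem stmt12 (K : Type) [Field K] (θ₀ θ₁ θ₂ θ₃ θ₄ θ₅ θ₆ θ₇ : K) :
    (Rx K + Ry K +
      (θ₀ • (Rx K) ^ 2 + θ₁ • (Rx K * Ry K) + θ₂ • (Ry K * Rx K) +
       θ₃ • (Rx K) ^ 3 + θ₄ • ((Rx K) ^ 2 * Ry K) + θ₅ • (Ry K * (Rx K) ^ 2) +
       θ₆ • (Rx K) ^ 4 + θ₇ • ((Rx K) ^ 3 * Ry K))) ^ 2 =
    (2 * θ₀ - θ₁ - θ₂) • (Rx K) ^ 3 + θ₀ • ((Rx K) ^ 2 * Ry K) +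
      θ₀ • (Ry K * (Rx K) ^ 2) +
      (2 * θ₃ - θ₄ - θ₅ + θ₀ ^ 2 - θ₁ * θ₂) • (Rx K) ^ 4 +
      (2 * θ₃ - θ₄ - θ₅ + θ₀ * θ₁ + θ₀ * θ₂ - θ₁ * θ₂) • ((Rx K) ^ 3 * Ry K) +
      (2 * θ₆ - 2 * θ₇ + 2 * θ₀ * θ₃ - 2 * θ₁ * θ₅ - 2 * θ₂ * θ₄) • (Rx K) ^ 5 := by
  have h1 : Rx K * Ry K * Rx K = 0 := by
    have h := RingQuot.mkAlgHom_rel K (F4Rel.xyx (K := K))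
    simpa [Rx, Ry, map_mul] using h
  have h2 : Ry K * Rx K * Ry K = 0 := by
    have h := RingQuot.mkAlgHom_rel K (F4Rel.yxy (K := K))
    simpa [Rx, Ry, map_mul] using h
  have h3 : (Rx K + Ry K) ^ 2 = 0 := by
    have h := RingQuot.mkAlgHom_rel K (F4Rel.sq (K := K))
    simpa [Rx, Ry, map_mul, map_add, map_pow] using h
  exact key (Rx K) (Ry K) h1 h2 h3 θ₀ θ₁ θ₂ θ₃ θ₄ θ₅ θ₆ θ₇
end

section
/- Let f = θ₀x² + θ₁xy + θ₂yx + θ₃x³ + θ₄x²y + θ₅yx² + θ₆x⁴ + θ₇x³y + θ₈x⁵ in R(F₄) = K⟨x,y⟩/(xyx, yxy, (x+y)²), with θᵢ ∈ K. If θ₀ = 0, θ₂ = −θ₁, θ₅ = 2θ₃ − θ₄ + θ₁², and 2θ₇ = 2(θ₆ − θ₁³ + 2θ₁(θ₄ − θ₃)), then (x + y + f)² = 0. -/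
private lemma aux13 (K : Type) [Field K] (A : Type) [Ring A] [Algebra K A]
    (θ₁ θ₃ θ₄ θ₆ θ₇ θ₈ : K)
    (h₇ : 2 * θ₇ = 2 * (θ₆ - θ₁ ^ 3 + 2 * θ₁ * (θ₄ - θ₃)))
    (X Y : A) (rxyx : X * Y * X = 0) (ryxy : Y * X * Y = 0) (rsq : (X + Y) ^ 2 = 0) :
    (X + Y +
      ((0:K) • X ^ 2 + θ₁ • (X * Y) + (-θ₁) • (Y * X) +
       θ₃ • X ^ 3 + θ₄ • (X ^ 2 * Y) + (2 * θ₃ - θ₄ + θ₁ ^ 2) • (Y * X ^ 2) +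
       θ₆ • X ^ 4 + θ₇ • (X ^ 3 * Y) + θ₈ • X ^ 5)) ^ 2 = 0 := by
  have r1 : X * (Y * X) = 0 := by rw [← mul_assoc]; exact rxyx
  have r2 : Y * (X * Y) = 0 := by rw [← mul_assoc]; exact ryxy
  have r0 : (X + Y) * (X + Y) = 0 := by rw [← pow_two]; exact rsq
  have r1' : ∀ z : A, X * (Y * (X * z)) = 0 := fun z => by
    calc X * (Y * (X * z)) = (X * (Y * X)) * z := by simp only [mul_assoc]
    _ = 0 := by rw [r1, zero_mul]
  have r2' : ∀ z : A, Y * (X * (Y * z)) = 0 := fun z => by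
    calc Y * (X * (Y * z)) = (Y * (X * Y)) * z := by simp only [mul_assoc]
    _ = 0 := by rw [r2, zero_mul]
  have r3 : Y * Y = -(X * X + X * Y + Y * X) := by
    have h : (X * X + X * Y + Y * X) + Y * Y = 0 := by
      rw [← r0]; noncomm_ring
    exact eq_neg_of_add_eq_zero_left (by rwa [add_comm] at h)
  have r3' : ∀ z : A, Y * (Y * z) = -(X * (X * z) + X * (Y * z) + Y * (X * z)) := fun z => by
    calc Y * (Y * z) = (Y * Y) * z := by rw [mul_assoc]
    _ = -(X * (X * z) + X * (Y * z) + Y * (X * z)) := by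
          rw [r3]; simp only [neg_mul, add_mul, mul_assoc]
  -- derived relations (Knuth–Bendix completion)
  have r5 : Y * (X * (X * Y)) = -(X * (X * (X * Y))) := by
    have h1 : Y * (Y * (X * Y)) = 0 := by rw [r2, mul_zero]
    rw [r3' (X * Y), r1' Y, add_zero, neg_eq_zero] at h1
    exact eq_neg_of_add_eq_zero_left (by rwa [add_comm] at h1)
  have r5' : ∀ z : A, Y * (X * (X * (Y * z))) = -(X * (X * (X * (Y * z)))) := fun z => by
    calc Y * (X * (X * (Y * z))) = (Y * (X * (X * Y))) * z := by
          simp only [mul_assoc]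
    _ = -(X * (X * (X * (Y * z)))) := by rw [r5]; simp only [neg_mul, mul_assoc]
  have r4 : Y * (X * (X * X)) = X * (X * (X * Y)) := by
    have h1 : Y * (X * (Y * Y)) = 0 := r2' Y
    simp only [r3, mul_neg, mul_add, neg_eq_zero] at h1
    rw [r5, r2' X, add_zero] at h1
    rw [← sub_eq_add_neg, sub_eq_zero] at h1
    exact h1
  have r4' : ∀ z : A, Y * (X * (X * (X * z))) = X * (X * (X * (Y * z))) := fun z => by
    calc Y * (X * (X * (X * z))) = (Y * (X * (X * X))) * z := by simp only [mul_assoc]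
    _ = X * (X * (X * (Y * z))) := by rw [r4]; simp only [mul_assoc]
  have r6 : X * (X * (X * (X * Y))) = 0 := by
    have h1 := r1' (X * Y)
    rw [r5, mul_neg, neg_eq_zero] at h1
    exact h1
  have r6' : ∀ z : A, X * (X * (X * (X * (Y * z)))) = 0 := fun z => by
    calc X * (X * (X * (X * (Y * z)))) = (X * (X * (X * (X * Y)))) * z := by
          simp only [mul_assoc]
    _ = 0 := by rw [r6, zero_mul]
  have r7 : X * (X * (X * (X * (X * X)))) = 0 := by
    have h1 := r6' Y
    simp only [r3, mul_neg, mul_add, neg_eq_zero, r6, r6' X, mul_zero, add_zero, zero_add] at h1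
    exact h1
  have r7' : ∀ z : A, X * (X * (X * (X * (X * (X * z))))) = 0 := fun z => by
    calc X * (X * (X * (X * (X * (X * z))))) = (X * (X * (X * (X * (X * X))))) * z := by
          simp only [mul_assoc]
    _ = 0 := by rw [r7, zero_mul]
  -- the main computation
  simp only [pow_succ, pow_zero, one_mul, mul_add, add_mul, mul_assoc, smul_mul_assoc,
    mul_smul_comm, smul_smul, smul_add, smul_neg, neg_add, neg_neg, mul_neg, neg_mul,
    zero_smul, zero_mul, mul_zero, smul_zero, add_zero, zero_add,
    r1, r1', r2, r2', r3, r3', r4, r4', r5, r5', r6, r6', r7, r7']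
  match_scalars <;> first
    | ring1
    | linear_combination h₇
    | linear_combination -h₇

theorem stmt13 (K : Type) [Field K] (θ₀ θ₁ θ₂ θ₃ θ₄ θ₅ θ₆ θ₇ θ₈ : K)
    (h₀ : θ₀ = 0) (h₂ : θ₂ = -θ₁) (h₅ : θ₅ = 2 * θ₃ - θ₄ + θ₁ ^ 2)
    (h₇ : 2 * θ₇ = 2 * (θ₆ - θ₁ ^ 3 + 2 * θ₁ * (θ₄ - θ₃))) :
    (Rx K + Ry K +
      (θ₀ • (Rx K) ^ 2 + θ₁ • (Rx K * Ry K) + θ₂ • (Ry K * Rx K) +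
       θ₃ • (Rx K) ^ 3 + θ₄ • ((Rx K) ^ 2 * Ry K) + θ₅ • (Ry K * (Rx K) ^ 2) +
       θ₆ • (Rx K) ^ 4 + θ₇ • ((Rx K) ^ 3 * Ry K) + θ₈ • (Rx K) ^ 5)) ^ 2 = 0 := by
  subst h₀ h₂ h₅
  have rxyx : Rx K * Ry K * Rx K = 0 := by
    have := RingQuot.mkAlgHom_rel K (F4Rel.xyx (K := K))
    simpa [Rx, Ry, map_mul] using this
  have ryxy : Ry K * Rx K * Ry K = 0 := by
    have := RingQuot.mkAlgHom_rel K (F4Rel.yxy (K := K))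
    simpa [Rx, Ry, map_mul] using this
  have rsq : (Rx K + Ry K) ^ 2 = 0 := by
    have := RingQuot.mkAlgHom_rel K (F4Rel.sq (K := K))
    simpa [Rx, Ry, map_pow, map_add] using this
  exact aux13 K (RF4 K) θ₁ θ₃ θ₄ θ₆ θ₇ θ₈ h₇ (Rx K) (Ry K) rxyx ryxy rsq
end

section
/- Let K be a field and A an associative K-algebra containing elements x, y with xyx = 0, yxy = 0, and (x+y)² = 0 (so the identities of R(F₄) hold among x and y). For any θ₁, θ₃, θ₄, θ₆ ∈ K define θ₂ = −θ₁, θ₅ = 2θ₃ − θ₄ + θ₁², and suppose 2θ₇ = 2(θ₆ − θ₁³ + 2θ₁(θ₄ − θ₃)). Then for f(x,y) = θ₁xy + θ₂yx + θ₃x³ + θ₄x²y + θ₅yx² + θ₆x⁴ + θ₇x³y + θ₈x⁵ (any θ₈ ∈ K), one has (x + y + f(x,y))² = 0. -/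
theorem stmt18 (K : Type) [Field K] (A : Type) [Ring A] [Algebra K A]
    (x y : A) (hxyx : x * y * x = 0) (hyxy : y * x * y = 0)
    (hsq : (x + y) ^ 2 = 0)
    (θ₁ θ₂ θ₃ θ₄ θ₅ θ₆ θ₇ θ₈ : K)
    (h₂ : θ₂ = -θ₁) (h₅ : θ₅ = 2 * θ₃ - θ₄ + θ₁ ^ 2)
    (h₇ : 2 * θ₇ = 2 * (θ₆ - θ₁ ^ 3 + 2 * θ₁ * (θ₄ - θ₃))) :
    (x + y +
      (θ₁ • (x * y) + θ₂ • (y * x) + θ₃ • x ^ 3 + θ₄ • (x ^ 2 * y) +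
       θ₅ • (y * x ^ 2) + θ₆ • x ^ 4 + θ₇ • (x ^ 3 * y) + θ₈ • x ^ 5)) ^ 2 = 0 := by
  subst h₂ h₅
  have hS : (x + y) * (x + y) = 0 := by rw [← pow_two]; exact hsq
  -- rule r2 : xyx = 0 (tail and element versions)
  have r2 : ∀ t : A, x * (y * (x * t)) = 0 := by
    intro t
    have h : x * (y * (x * t)) = (x * y * x) * t := by noncomm_ring
    rw [h, hxyx, zero_mul]
  have r2' : x * (y * x) = 0 := by rw [← mul_assoc, hxyx]
  -- rule r3 : yxy = 0
  have r3 : ∀ t : A, y * (x * (y * t)) = 0 := by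
    intro t
    have h : y * (x * (y * t)) = (y * x * y) * t := by noncomm_ring
    rw [h, hyxy, zero_mul]
  have r3' : y * (x * y) = 0 := by rw [← mul_assoc, hyxy]
  -- rule r1 : yy = -xx - xy - yx
  have r1 : ∀ t : A, y * (y * t) = -(x * (x * t)) - x * (y * t) - y * (x * t) := by
    intro t
    have h : y * (y * t) - (-(x * (x * t)) - x * (y * t) - y * (x * t))
        = ((x + y) * (x + y)) * t := by noncomm_ring
    rw [hS, zero_mul] at h
    exact sub_eq_zero.mp h
  have r1' : y * y = -(x * x) - x * y - y * x := by
    have h : y * y - (-(x * x) - x * y - y * x) = (x + y) * (x + y) := by noncomm_ring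
    rw [hS] at h
    exact sub_eq_zero.mp h
  -- rule r4 : yxxx = xxxy
  have r4 : ∀ t : A, y * (x * (x * (x * t))) = x * (x * (x * (y * t))) := by
    intro t
    have h : y * (x * (x * (x * t))) - x * (x * (x * (y * t)))
        = (x * y * x) * (y * t) - y * ((x * y * x) * t) - (y * x * y) * (y * t)
          + y * ((y * x * y) * t) - ((x + y) * (x + y)) * (x * (y * t))
          + y * (x * (((x + y) * (x + y)) * t)) := by noncomm_ring
    rw [hxyx, hyxy, hS] at h
    simp only [zero_mul, mul_zero, sub_zero, add_zero, zero_sub, neg_zero, zero_add] at h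
    exact sub_eq_zero.mp h
  have r4' : y * (x * (x * x)) = x * (x * (x * y)) := by
    have h : y * (x * (x * x)) - x * (x * (x * y))
        = (x * y * x) * y - y * (x * y * x) - (y * x * y) * y
          + y * (y * x * y) - ((x + y) * (x + y)) * (x * y)
          + y * (x * ((x + y) * (x + y))) := by noncomm_ring
    rw [hxyx, hyxy, hS] at h
    simp only [zero_mul, mul_zero, sub_zero, add_zero, zero_sub, neg_zero, zero_add] at h
    exact sub_eq_zero.mp h
  -- rule r5 : yxxy = -xxxy
  have r5 : ∀ t : A, y * (x * (x * (y * t))) = -(x * (x * (x * (y * t)))) := by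
    intro t
    have h : y * (x * (x * (y * t))) - -(x * (x * (x * (y * t))))
        = -((x * y * x) * (y * t)) - y * ((y * x * y) * t)
          + ((x + y) * (x + y)) * (x * (y * t)) := by noncomm_ring
    rw [hxyx, hyxy, hS] at h
    simp only [zero_mul, mul_zero, sub_zero, add_zero, zero_sub, neg_zero, zero_add,
      neg_neg] at h
    exact sub_eq_zero.mp h
  have r5' : y * (x * (x * y)) = -(x * (x * (x * y))) := by
    have h : y * (x * (x * y)) - -(x * (x * (x * y)))
        = -((x * y * x) * y) - y * (y * x * y)
          + ((x + y) * (x + y)) * (x * y) := by noncomm_ring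
    rw [hxyx, hyxy, hS] at h
    simp only [zero_mul, mul_zero, sub_zero, add_zero, zero_sub, neg_zero, zero_add,
      neg_neg] at h
    exact sub_eq_zero.mp h
  -- rule r6 : xxxxy = 0
  have r6 : ∀ t : A, x * (x * (x * (x * (y * t)))) = 0 := by
    intro t
    have h : x * (x * (x * (x * (y * t))))
        = -((x * y * x) * (x * (y * t))) - x * ((x * y * x) * (y * t))
          - x * (y * ((y * x * y) * t))
          + x * (((x + y) * (x + y)) * (x * (y * t))) := by noncomm_ring
    rw [hxyx, hyxy, hS] at h
    simp only [zero_mul, mul_zero, sub_zero, add_zero, zero_sub, neg_zero, zero_add] at h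
    exact h
  have r6' : x * (x * (x * (x * y))) = 0 := by
    have h : x * (x * (x * (x * y)))
        = -((x * y * x) * (x * y)) - x * ((x * y * x) * y)
          - x * (y * (y * x * y))
          + x * (((x + y) * (x + y)) * (x * y)) := by noncomm_ring
    rw [hxyx, hyxy, hS] at h
    simp only [zero_mul, mul_zero, sub_zero, add_zero, zero_sub, neg_zero, zero_add] at h
    exact h
  -- rule r7 : x^6 = 0
  have r7 : ∀ t : A, x * (x * (x * (x * (x * (x * t))))) = 0 := by
    intro t
    have h : x * (x * (x * (x * (x * (x * t)))))
        = (x * y * x) * (y * (y * (x * t))) - y * ((x * y * x) * (y * (x * t)))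
          - x * (x * ((x * y * x) * (x * t))) - x * (x * (x * ((x * y * x) * t)))
          - y * (x * (x * ((x * y * x) * t)))
          - (y * x * y) * (y * (y * (x * t))) + y * ((y * x * y) * (y * (x * t)))
          - ((x + y) * (x + y)) * (x * (y * (y * (x * t))))
          + y * (x * (((x + y) * (x + y)) * (y * (x * t))))
          + x * (x * (x * (((x + y) * (x + y)) * (x * t)))) := by noncomm_ring
    rw [hxyx, hyxy, hS] at h
    simp only [zero_mul, mul_zero, sub_zero, add_zero, zero_sub, neg_zero, zero_add] at h
    exact h
  have r7' : x * (x * (x * (x * (x * x)))) = 0 := by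
    have h : x * (x * (x * (x * (x * x))))
        = (x * y * x) * (y * (y * x)) - y * ((x * y * x) * (y * x))
          - x * (x * ((x * y * x) * x)) - x * (x * (x * (x * y * x)))
          - y * (x * (x * (x * y * x)))
          - (y * x * y) * (y * (y * x)) + y * ((y * x * y) * (y * x))
          - ((x + y) * (x + y)) * (x * (y * (y * x)))
          + y * (x * (((x + y) * (x + y)) * (y * x)))
          + x * (x * (x * (((x + y) * (x + y)) * x))) := by noncomm_ring
    rw [hxyx, hyxy, hS] at h
    simp only [zero_mul, mul_zero, sub_zero, add_zero, zero_sub, neg_zero, zero_add] at h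
    exact h
  have key : (x + y +
      (θ₁ • (x * y) + (-θ₁) • (y * x) + θ₃ • x ^ 3 + θ₄ • (x ^ 2 * y) +
       (2 * θ₃ - θ₄ + θ₁ ^ 2) • (y * x ^ 2) + θ₆ • x ^ 4 + θ₇ • (x ^ 3 * y) + θ₈ • x ^ 5)) ^ 2
      = (2 * θ₆ - 4 * θ₁ * θ₃ + 4 * θ₁ * θ₄ - 2 * θ₁ ^ 3 - 2 * θ₇) •
          (x * (x * (x * (x * x)))) := by
    simp only [pow_succ, pow_zero, one_mul, mul_add, add_mul, mul_sub, sub_mul,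
      smul_mul_assoc, mul_smul_comm, smul_smul, mul_assoc,
      r2, r2', r3, r3', r1, r1', r4, r4', r5, r5', r6, r6', r7, r7',
      mul_zero, zero_mul, smul_zero, add_zero, zero_add, neg_mul, mul_neg,
      smul_neg, neg_neg, smul_add, smul_sub, sub_zero, zero_sub]
    module
  rw [key]
  have hC : 2 * θ₆ - 4 * θ₁ * θ₃ + 4 * θ₁ * θ₄ - 2 * θ₁ ^ 3 - 2 * θ₇ = 0 := by
    linear_combination -h₇
  rw [hC, zero_smul]
end
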